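/- For every positive integer n, (2n² + 1)/(3n) ≤ V(n) ≤ 2n(n+2)/(3(n+1)). The lower bound is attained iff n is a power of 2, and the upper bound is attained iff n = 2^{m+1} - 1 for some m ≥ 0. -/

import Mathlib

open Finset

/-- The largest odd divisor of `k`. -/
def oddPart (k : ℕ) : ℕ := ordCompl[2] k

/-- `V n = ∑_{k=1}^n α(k)/k` as a rational number. -/
def V (n : ℕ) : ℚ := ∑ k ∈ Finset.Icc 1 n, (oddPart k : ℚ) / k

/-- `v n = V n - 2n/3`. -/
def v (n : ℕ) : ℚ := V n - 2 * n / 3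

/-- `U n = ∑_{k=1}^n α(k)`. -/
def U (n : ℕ) : ℕ := ∑ k ∈ Finset.Icc 1 n, oddPart k

/-- `G n = ∑_{k=1}^n (n+1-k)·α(k)/k` as a rational number. -/
def G (n : ℕ) : ℚ := ∑ k ∈ Finset.Icc 1 n, ((n : ℚ) + 1 - k) * (oddPart k : ℚ) / k

/-- `g n = n(n+2)/3 - G n`. -/
def g (n : ℕ) : ℚ := n * (n + 2) / 3 - G n

/-!
Let `L n` and `U n` be the gaps between `V n` and the lower and upper bounds. The recursions
`V (2k) = k + V k / 2` and `V (2k+1) = k + 1 + V k / 2` give `L (2k) = L k / 2`,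
`L (2k+1) > L k / 2`, `U (2k+1) = U k / 2` and `U (2k) > U k / 2`, with `L 1 = U 1 = 0`.
Building `n` in binary from its leading `1`, a gap stays zero exactly as long as only the bit that
halves it is appended: `L n = 0` iff `n = 10…0₂`, and `U n = 0` iff `n = 11…1₂`.
-/

lemma oddPart_two_mul (k : ℕ) : oddPart (2 * k) = oddPart k := by
  simpa [oddPart] using Nat.ordCompl_self_pow_mul k 1 Nat.prime_two

lemma oddPart_of_odd {k : ℕ} (hk : Odd k) : oddPart k = k :=
  (Nat.ordCompl_eq_self_iff_zero_or_not_dvd k Nat.prime_two).2 (Or.inr hk.not_two_dvd_nat)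

lemma V_succ (n : ℕ) : V (n + 1) = V n + oddPart (n + 1) / (n + 1) := by
  rw [V, Finset.sum_Icc_succ_top (by omega), ← V]
  push_cast
  rfl

lemma V_two_mul_add_one_eq (k : ℕ) : V (2 * k + 1) = V (2 * k) + 1 := by
  rw [V_succ, oddPart_of_odd (odd_two_mul_add_one k)]
  push_cast
  rw [div_self (by positivity)]

lemma V_two_mul (k : ℕ) : V (2 * k) = k + V k / 2 := by
  induction k with
  | zero => simp [V]
  | succ k ih =>
    rw [show 2 * (k + 1) = 2 * k + 1 + 1 by ring, V_succ, V_two_mul_add_one_eq, ih, V_succ (n := k),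
      show 2 * k + 1 + 1 = 2 * (k + 1) by ring, oddPart_two_mul]
    push_cast
    field_simp
    ring

lemma V_two_mul_add_one (k : ℕ) : V (2 * k + 1) = k + 1 + V k / 2 := by
  rw [V_two_mul_add_one_eq, V_two_mul]
  ring

lemma Nat.exists_bit_eq_iterate_bit_one_iff {b c : Bool} {k : ℕ} (hk : k ≠ 0) :
    (∃ m, Nat.bit c k = (Nat.bit b)^[m] 1) ↔ c = b ∧ ∃ m, k = (Nat.bit b)^[m] 1 := by
  constructor
  · rintro ⟨_ | m, hm⟩
    · rw [Function.iterate_zero_apply, Nat.bit_val] at hm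
      have := Bool.toNat_le c
      omega
    · rw [Function.iterate_succ_apply'] at hm
      have hbit := congrArg (Nat.testBit · 0) hm
      have hhalf := congrArg (· / 2) hm
      simp only [Nat.testBit_bit_zero, Nat.bit_div_two] at hbit hhalf
      exact ⟨hbit, m, hhalf⟩
  · rintro ⟨rfl, m, rfl⟩
    exact ⟨m + 1, (Function.iterate_succ_apply' _ _ _).symm⟩

lemma Nat.iterate_bit_false_one (m : ℕ) : (Nat.bit false)^[m] 1 = 2 ^ m := by
  induction m with
  | zero => rfl
  | succ m ih => rw [Function.iterate_succ_apply', ih, Nat.bit_false_apply, pow_succ, mul_comm]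

lemma Nat.iterate_bit_true_one (m : ℕ) : (Nat.bit true)^[m] 1 = 2 ^ (m + 1) - 1 := by
  induction m with
  | zero => rfl
  | succ m ih =>
    rw [Function.iterate_succ_apply', ih, Nat.bit_true_apply, pow_succ _ (m + 1)]
    have := Nat.one_le_two_pow (n := m + 1)
    omega

structure BitHalving {K : Type*} [Field K] [LinearOrder K] (b : Bool) (f : ℕ → K) : Prop where
  one : f 1 = 0
  bit_eq : ∀ k, k ≠ 0 → f (Nat.bit b k) = f k / 2
  half_lt_bit_not : ∀ k, k ≠ 0 → f k / 2 < f (Nat.bit (!b) k)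

namespace BitHalving

variable {K : Type*} [Field K] [LinearOrder K] [IsStrictOrderedRing K] {b : Bool} {f : ℕ → K}

lemma nonneg (hf : BitHalving b f) {n : ℕ} (hn : n ≠ 0) : 0 ≤ f n := by
  induction n using Nat.binaryRecFromOne with
  | zero => contradiction
  | one => exact hf.one.ge
  | bit c k hk ih =>
    have hfk := ih hk
    obtain rfl | rfl : c = b ∨ c = !b := by cases b <;> cases c <;> simp
    · rw [hf.bit_eq k hk]
      positivity
    · linarith [hf.half_lt_bit_not k hk]

lemma eq_zero_iff (hf : BitHalving b f) {n : ℕ} (hn : n ≠ 0) :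
    f n = 0 ↔ ∃ m, n = (Nat.bit b)^[m] 1 := by
  induction n using Nat.binaryRecFromOne with
  | zero => contradiction
  | one => exact ⟨fun _ ↦ ⟨0, rfl⟩, fun _ ↦ hf.one⟩
  | bit c k hk ih =>
    rw [Nat.exists_bit_eq_iterate_bit_one_iff hk]
    obtain rfl | rfl : c = b ∨ c = !b := by cases b <;> cases c <;> simp
    · simp [hf.bit_eq k hk, ih hk]
    · have hlt := hf.half_lt_bit_not k hk
      have hfk := hf.nonneg hk
      simp only [Bool.not_eq_self, false_and, iff_false]
      linarith

end BitHalving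

def lowerGap (n : ℕ) : ℚ := V n - (2 * n ^ 2 + 1 : ℚ) / (3 * n)

def upperGap (n : ℕ) : ℚ := 2 * n * (n + 2) / (3 * (n + 1)) - V n

lemma lowerGap_two_mul {k : ℕ} (hk : k ≠ 0) : lowerGap (2 * k) = lowerGap k / 2 := by
  simp only [lowerGap, V_two_mul]
  push_cast
  field_simp
  ring

lemma lowerGap_two_mul_add_one {k : ℕ} (hk : k ≠ 0) :
    lowerGap (2 * k + 1) = lowerGap k / 2 + (4 * k ^ 2 + 2 * k + 1) / (6 * k * (2 * k + 1)) := by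
  simp only [lowerGap, V_two_mul_add_one]
  push_cast
  field_simp
  ring

lemma upperGap_two_mul (k : ℕ) :
    upperGap (2 * k) = upperGap k / 2 + k * (2 * k + 3) / (3 * (2 * k + 1) * (k + 1)) := by
  simp only [upperGap, V_two_mul]
  push_cast
  field_simp
  ring

lemma upperGap_two_mul_add_one (k : ℕ) : upperGap (2 * k + 1) = upperGap k / 2 := by
  simp only [upperGap, V_two_mul_add_one]
  push_cast
  field_simp
  ring

lemma bitHalving_lowerGap : BitHalving false lowerGap where
  one := by norm_num [lowerGap, V, oddPart_of_odd odd_one]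
  bit_eq k hk := by rw [Nat.bit_false_apply, lowerGap_two_mul hk]
  half_lt_bit_not k hk := by
    rw [Bool.not_false, Nat.bit_true_apply, lowerGap_two_mul_add_one hk, lt_add_iff_pos_right]
    positivity

lemma bitHalving_upperGap : BitHalving true upperGap where
  one := by norm_num [upperGap, V, oddPart_of_odd odd_one]
  bit_eq k _ := by rw [Nat.bit_true_apply, upperGap_two_mul_add_one]
  half_lt_bit_not k hk := by
    rw [Bool.not_true, Nat.bit_false_apply, upperGap_two_mul, lt_add_iff_pos_right]
    have : (0 : ℚ) < k := by positivity
    positivity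

theorem stmt8 (n : ℕ) (hn : 0 < n) :
    ((2 * n ^ 2 + 1 : ℚ) / (3 * n) ≤ V n ∧ V n ≤ 2 * n * (n + 2) / (3 * (n + 1))) ∧
      (V n = (2 * n ^ 2 + 1 : ℚ) / (3 * n) ↔ ∃ m : ℕ, n = 2 ^ m) ∧
      (V n = 2 * n * (n + 2) / (3 * (n + 1)) ↔ ∃ m : ℕ, n = 2 ^ (m + 1) - 1) := by
  have hn0 : n ≠ 0 := hn.ne'
  refine ⟨⟨sub_nonneg.1 (bitHalving_lowerGap.nonneg hn0),
    sub_nonneg.1 (bitHalving_upperGap.nonneg hn0)⟩, ?_, ?_⟩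
  · rw [← sub_eq_zero, ← lowerGap, bitHalving_lowerGap.eq_zero_iff hn0]
    simp only [Nat.iterate_bit_false_one]
  · rw [eq_comm, ← sub_eq_zero, ← upperGap, bitHalving_upperGap.eq_zero_iff hn0]
    simp only [Nat.iterate_bit_true_one]
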